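/- arXiv:math/0601575 — 2 statements merged into one kernel-verified Lean document; each statement's English description precedes it below -/
import Mathlib

section
/- Let P be a bounded above cochain complex of F-projective objects and X any cochain complex. Then the localization functor induces an isomorphism Hom_{K(A)}(P, X) ≅ Hom_{D_F(A)}(P, X), where D_F(A) is the localization of K(A) at the F-split acyclic complexes. -/
open CategoryTheory Limits

variable {A B : Type*} [Category A] [Category B] [Abelian A] [Abelian B]

/-- An object of `A` is `F`-projective if it is a direct summand of `L Y` for some `Y`. -/
def FProjective (L : B ⥤ A) (P : A) : Prop :=
  ∃ (Y : B) (i : P ⟶ L.obj Y) (r : L.obj Y ⟶ P), i ≫ r = 𝟙 P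

/-- The class of morphisms of the homotopy category `K(A)` represented by chain maps
whose mapping cone is `F`-split acyclic (becomes contractible after applying `F`).
`D_F(A)` is the localization of `K(A)` at this class. -/
def FConeSplit (F : A ⥤ B) [F.Additive] :
    MorphismProperty (HomotopyCategory A (ComplexShape.up ℤ)) := fun X Y φ =>
  ∃ (X' Y' : CochainComplex A ℤ) (f : X' ⟶ Y')
    (eX : (HomotopyCategory.quotient A (ComplexShape.up ℤ)).obj X' ≅ X)
    (eY : (HomotopyCategory.quotient A (ComplexShape.up ℤ)).obj Y' ≅ Y),
    eX.hom ≫ φ = (HomotopyCategory.quotient A (ComplexShape.up ℤ)).map f ≫ eY.hom ∧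
    Nonempty (Homotopy
      (𝟙 ((F.mapHomologicalComplex (ComplexShape.up ℤ)).obj (CochainComplex.mappingCone f))) 0)

/-!
The `F`-split acyclic complexes are the kernel of the triangulated functor `K(A) ⥤ K(B)`
induced by `F`, so `D_F(A)` is a Verdier localization of `K(A)`, and it suffices to show that
`P` is left orthogonal to this kernel. Let `N` be a complex with `F N` contractible. A cycle
`L Y ⟶ N^{n+1}` corresponds under `L ⊣ F` to a cycle `Y ⟶ F N^{n+1}`, which the contraction of
`F N` lifts through the differential; by retracts the same holds for every `F`-projective
source. Since `P` is bounded above, such lifts assemble, by downward induction on the degree,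
into a null-homotopy of any chain map `P ⟶ N`.
-/

open Pretriangulated in
instance CategoryTheory.ObjectProperty.isTriangulated_isZero {C : Type*} [Category C]
    [HasZeroObject C] [HasShift C ℤ] [Preadditive C] [∀ n : ℤ, (shiftFunctor C n).Additive]
    [Pretriangulated C] : ObjectProperty.IsTriangulated (IsZero (C := C)) where
  isStableUnderShiftBy n := ⟨fun _ hX => (shiftFunctor C n).map_isZero hX⟩
  toIsTriangulatedClosed₂ := .mk' fun T hT h₁ h₃ => Triangle.isZero₂_of_isZero₁₃ T hT h₁ h₃

lemma Homotopy.comp_hom_comp_d_eq_self {C : Type*} [Category C] [Preadditive C]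
    {K : CochainComplex C ℤ} (H : Homotopy (𝟙 K) 0) {Y : C} {n : ℤ}
    (w : Y ⟶ K.X (n + 1)) (hw : w ≫ K.d (n + 1) (n + 1 + 1) = 0) :
    (w ≫ H.hom (n + 1) n) ≫ K.d n (n + 1) = w := by
  have hcomm := congrArg (w ≫ ·) (H.comm (n + 1))
  rw [dNext_eq _ (show (ComplexShape.up ℤ).Rel (n + 1) (n + 1 + 1) from rfl),
    prevD_eq _ (show (ComplexShape.up ℤ).Rel n (n + 1) from rfl)] at hcomm
  simpa [reassoc_of% hw] using hcomm.symm

lemma FProjective.exists_comp_d_eq {F : A ⥤ B} [F.Additive] {L : B ⥤ A} (adj : L ⊣ F)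
    {M : A} (hM : FProjective L M) {N : CochainComplex A ℤ}
    (H : Homotopy (𝟙 ((F.mapHomologicalComplex (ComplexShape.up ℤ)).obj N)) 0) {n : ℤ}
    (u : M ⟶ N.X (n + 1)) (hu : u ≫ N.d (n + 1) (n + 1 + 1) = 0) :
    ∃ v : M ⟶ N.X n, v ≫ N.d n (n + 1) = u := by
  obtain ⟨Y, i, r, hir⟩ := hM
  set w := adj.homEquiv _ _ (r ≫ u)
  have hw : w ≫ F.map (N.d (n + 1) (n + 1 + 1)) = 0 := by
    rw [← adj.homEquiv_naturality_right, Category.assoc, hu, comp_zero,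
      adj.homEquiv_unit, F.map_zero, comp_zero]
  obtain ⟨v, hv⟩ : ∃ v : Y ⟶ F.obj (N.X n), v ≫ F.map (N.d n (n + 1)) = w :=
    ⟨_, H.comp_hom_comp_d_eq_self w hw⟩
  refine ⟨i ≫ (adj.homEquiv _ _).symm v, ?_⟩
  rw [Category.assoc, ← adj.homEquiv_naturality_right_symm, hv, Equiv.symm_apply_apply,
    reassoc_of% hir]

namespace CochainComplex

variable {C : Type*} [Category C] [Preadditive C] {P N : CochainComplex C ℤ}

/-- Built downwards from `b`: in degree `n`, lift the cycle `f - d ∘ h` through `N.d n (n + 1)`,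
where `h` is the component already built one degree higher. -/
def nullHomotopyHom (lift : ∀ n : ℤ, (P.X (n + 1) ⟶ N.X (n + 1)) → (P.X (n + 1) ⟶ N.X n))
    (f : P ⟶ N) (b n : ℤ) : P.X (n + 1) ⟶ N.X n :=
  if n ≤ b then
    lift n (f.f (n + 1) - P.d (n + 1) (n + 1 + 1) ≫ nullHomotopyHom lift f b (n + 1))
  else 0
termination_by (b + 1 - n).toNat

lemma nullHomotopyHom_comp_d
    (lift : ∀ n : ℤ, (P.X (n + 1) ⟶ N.X (n + 1)) → (P.X (n + 1) ⟶ N.X n))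
    (hlift : ∀ n u, u ≫ N.d (n + 1) (n + 1 + 1) = 0 → lift n u ≫ N.d n (n + 1) = u)
    (f : P ⟶ N) {b : ℤ} (hb : ∀ i, b < i → IsZero (P.X i)) (n : ℤ) :
    nullHomotopyHom lift f b n ≫ N.d n (n + 1) =
      f.f (n + 1) - P.d (n + 1) (n + 1 + 1) ≫ nullHomotopyHom lift f b (n + 1) := by
  rw [nullHomotopyHom]
  split_ifs with hn
  · apply hlift
    rw [Preadditive.sub_comp, Category.assoc, nullHomotopyHom_comp_d lift hlift f hb (n + 1),
      Preadditive.comp_sub, f.comm, HomologicalComplex.d_comp_d_assoc, zero_comp, sub_zero,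
      sub_self]
  · exact (hb (n + 1) (by omega)).eq_of_src _ _
termination_by (b + 1 - n).toNat

lemma nonempty_homotopy_zero_of_exists_lift {b : ℤ} (hb : ∀ i, b < i → IsZero (P.X i))
    (hlift : ∀ n (u : P.X (n + 1) ⟶ N.X (n + 1)), u ≫ N.d (n + 1) (n + 1 + 1) = 0 →
      ∃ v : P.X (n + 1) ⟶ N.X n, v ≫ N.d n (n + 1) = u)
    (f : P ⟶ N) : Nonempty (Homotopy f 0) := by
  have hlift' : ∀ n (u : P.X (n + 1) ⟶ N.X (n + 1)), ∃ v : P.X (n + 1) ⟶ N.X n,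
      u ≫ N.d (n + 1) (n + 1 + 1) = 0 → v ≫ N.d n (n + 1) = u := fun n u => by
    by_cases hu : u ≫ N.d (n + 1) (n + 1 + 1) = 0
    · exact (hlift n u hu).imp fun _ hv _ => hv
    · exact ⟨0, fun h => absurd h hu⟩
  choose lift hlift using hlift'
  refine ⟨{ hom := fun i j => if hij : j + 1 = i then
              eqToHom (congrArg P.X hij.symm) ≫ nullHomotopyHom lift f b j else 0,
            zero := fun i j hij => dif_neg hij,
            comm := fun i => ?_ }⟩
  obtain ⟨m, rfl⟩ : ∃ m, i = m + 1 := ⟨i - 1, by omega⟩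
  rw [dNext_eq _ (show (ComplexShape.up ℤ).Rel (m + 1) (m + 1 + 1) from rfl),
    prevD_eq _ (show (ComplexShape.up ℤ).Rel m (m + 1) from rfl), dif_pos rfl, dif_pos rfl]
  simp only [eqToHom_refl, Category.id_comp]
  rw [nullHomotopyHom_comp_d lift hlift f hb m, HomologicalComplex.zero_f_apply, add_zero,
    add_sub_cancel]

end CochainComplex

lemma HomotopyCategory.isZero_mapHomotopyCategory_obj_quotient_iff {C D ι : Type*}
    [Category C] [Category D] [Preadditive C] [Preadditive D] {c : ComplexShape ι}
    (F : C ⥤ D) [F.Additive] (K : HomologicalComplex C c) :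
    IsZero ((F.mapHomotopyCategory c).obj ((quotient C c).obj K)) ↔
      Nonempty (Homotopy (𝟙 ((F.mapHomologicalComplex c).obj K)) 0) := by
  rw [← isZero_quotient_obj_iff]
  exact Iso.isZero_iff ((F.mapHomotopyCategoryFactors c).app K)

lemma FProjective.leftOrthogonal_kernel_mapHomotopyCategory {F : A ⥤ B} [F.Additive]
    {L : B ⥤ A} (adj : L ⊣ F) {P : CochainComplex A ℤ} {b : ℤ}
    (hb : ∀ i, b < i → IsZero (P.X i)) (hproj : ∀ i, FProjective L (P.X i)) :
    (F.mapHomotopyCategory (ComplexShape.up ℤ)).kernel.leftOrthogonal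
      ((HomotopyCategory.quotient A (ComplexShape.up ℤ)).obj P) := by
  rintro ⟨N⟩ φ hN
  obtain ⟨f, rfl⟩ := (HomotopyCategory.quotient A (ComplexShape.up ℤ)).map_surjective φ
  obtain ⟨H⟩ := (HomotopyCategory.isZero_mapHomotopyCategory_obj_quotient_iff F N).1 hN
  obtain ⟨Hf⟩ := CochainComplex.nonempty_homotopy_zero_of_exists_lift hb
    (fun n u hu => (hproj (n + 1)).exists_comp_d_eq adj H u hu) f
  exact (HomotopyCategory.eq_of_homotopy _ _ Hf).trans (Functor.map_zero _ _ _)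

lemma fConeSplit_eq_trW_kernel (F : A ⥤ B) [F.Additive] :
    FConeSplit F = (F.mapHomotopyCategory (ComplexShape.up ℤ)).kernel.trW := by
  have trW_iff {X Y : CochainComplex A ℤ} (f : X ⟶ Y) :
      (F.mapHomotopyCategory (ComplexShape.up ℤ)).kernel.trW
          ((HomotopyCategory.quotient A (ComplexShape.up ℤ)).map f) ↔
        Nonempty (Homotopy ((𝟙 ((F.mapHomologicalComplex (ComplexShape.up ℤ)).obj
          (CochainComplex.mappingCone f)))) 0) :=
    (ObjectProperty.trW_iff_of_distinguished _ _
      (HomotopyCategory.mappingCone_triangleh_distinguished f)).trans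
      (HomotopyCategory.isZero_mapHomotopyCategory_obj_quotient_iff F _)
  ext X Y φ
  constructor
  · rintro ⟨X', Y', f, eX, eY, hφ, hf⟩
    exact (MorphismProperty.arrow_mk_iso_iff _ (Arrow.isoMk eX eY hφ)).1 ((trW_iff f).2 hf)
  · obtain ⟨X'⟩ := X
    obtain ⟨Y'⟩ := Y
    obtain ⟨f, rfl⟩ := (HomotopyCategory.quotient A (ComplexShape.up ℤ)).map_surjective φ
    exact fun hφ => ⟨X', Y', f, Iso.refl _, Iso.refl _,
      (Category.id_comp _).trans (Category.comp_id _).symm, (trW_iff f).1 hφ⟩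

theorem stmt_16_general (F : A ⥤ B) [F.Additive]
    (L : B ⥤ A) (adj₁ : L ⊣ F)
    (P X : CochainComplex A ℤ)
    (hbdd : ∃ b : ℤ, ∀ i : ℤ, b < i → IsZero (P.X i))
    (hproj : ∀ i : ℤ, FProjective L (P.X i)) :
    Function.Bijective (fun g :
        ((HomotopyCategory.quotient A (ComplexShape.up ℤ)).obj P ⟶
          (HomotopyCategory.quotient A (ComplexShape.up ℤ)).obj X) =>
      (FConeSplit F).Q.map g) := by
  obtain ⟨b, hb⟩ := hbdd
  rw [fConeSplit_eq_trW_kernel F]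
  exact (FProjective.leftOrthogonal_kernel_mapHomotopyCategory adj₁ hb hproj
    ).map_bijective_of_isTriangulated _ _

/-- For `P` a bounded above complex of `F`-projective objects and `X` any complex, the
localization functor `K(A) ⟶ D_F(A)` induces a bijection
`Hom_{K(A)}(P, X) ≅ Hom_{D_F(A)}(P, X)`. -/
theorem stmt_16 (F : A ⥤ B) [F.Additive] [F.Faithful]
    [PreservesFiniteLimits F] [PreservesFiniteColimits F]
    (L R : B ⥤ A) (adj₁ : L ⊣ F) (adj₂ : F ⊣ R)
    (P X : CochainComplex A ℤ)
    (hbdd : ∃ b : ℤ, ∀ i : ℤ, b < i → IsZero (P.X i))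
    (hproj : ∀ i : ℤ, FProjective L (P.X i)) :
    Function.Bijective (fun g :
        ((HomotopyCategory.quotient A (ComplexShape.up ℤ)).obj P ⟶
          (HomotopyCategory.quotient A (ComplexShape.up ℤ)).obj X) =>
      (FConeSplit F).Q.map g) :=
  stmt_16_general F L adj₁ P X hbdd hproj
end

section
/- Every bounded above cochain complex X over A admits an F-projective resolution: a bounded above complex P of F-projective objects together with a chain map p : P → X whose cone is F-split acyclic (zero in D_F(A)). -/
/-!
The resolution is built downwards from the degree `b` above which `X` vanishes. Alongside
`Pⁿ`, `dⁿ : Pⁿ ⟶ Pⁿ⁺¹` and `πⁿ : Pⁿ ⟶ Xⁿ` one carries data living only after applying `F`: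
`σⁿ : F Xⁿ ⟶ F Pⁿ`, a chain section of `F π`, and `τⁿ : F Pⁿ⁺¹ ⟶ F Pⁿ`, a homotopy from
`F π ≫ σ` to the identity with `τ ≫ F π = 0`. Given everything in degrees `> n`, let
`K ⊆ Pⁿ⁺¹ ⊞ Xⁿ` consist of the pairs `(y, x)` with `d y = 0` and `π y = d x`, and put
`Pⁿ = L (F K)`, with `dⁿ` and `πⁿ` the two components of the counit `L (F K) ⟶ K`. As a right
adjoint `F` preserves kernels, and by the triangle identity every map into `F K` lifts along
`F` of the counit; lifting `x ↦ (σ (d x), x)` and the defect `F π ≫ σ - 1 - F d ≫ τ` gives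
`σⁿ` and `τⁿ`. In the end `F π` is a homotopy equivalence, so the mapping cone of `F π`, which
is `F` applied to the mapping cone of `π`, is contractible.
-/

open CategoryTheory Limits

variable {A B : Type*} [Category A] [Category B] [Abelian A] [Abelian B]

open ZeroObject

set_option linter.unusedSectionVars false

lemma CategoryTheory.Functor.map_biprod_hom_ext (F : A ⥤ B) [F.Additive] {Y Z : A} {W : B}
    {f g : W ⟶ F.obj (Y ⊞ Z)}
    (h₁ : f ≫ F.map biprod.fst = g ≫ F.map biprod.fst)
    (h₂ : f ≫ F.map biprod.snd = g ≫ F.map biprod.snd) : f = g := by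
  have total (h : W ⟶ F.obj (Y ⊞ Z)) :
      h = h ≫ F.map biprod.fst ≫ F.map biprod.inl + h ≫ F.map biprod.snd ≫ F.map biprod.inr := by
    rw [← F.map_comp, ← F.map_comp, ← Preadditive.comp_add, ← F.map_add, biprod.total,
      F.map_id, Category.comp_id]
  rw [total f, total g, reassoc_of% h₁, reassoc_of% h₂]

namespace CategoryTheory.Adjunction

variable {F : A ⥤ B} {L : B ⥤ A} (adj : L ⊣ F) {Y Z : A} (f : Y ⟶ Z)
  {W : B} (w : W ⟶ F.obj Y) (hw : w ≫ F.map f = 0)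

noncomputable def liftCounitKernel : W ⟶ F.obj (L.obj (F.obj (kernel f))) :=
  have := adj.isRightAdjoint
  kernel.lift _ w hw ≫ (PreservesKernel.iso F f).inv ≫ adj.unit.app _

lemma liftCounitKernel_map {Z' : A} (g : Y ⟶ Z') :
    adj.liftCounitKernel f w hw ≫ F.map (adj.counit.app _ ≫ kernel.ι f ≫ g) = w ≫ F.map g := by
  simp [liftCounitKernel]

end CategoryTheory.Adjunction

lemma CochainComplex.mappingCone.isZero_quotient_obj_of_homotopyEquiv {C : Type*} [Category C]
    [Preadditive C] [HasZeroObject C] [HasBinaryBiproducts C]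
    {K L : CochainComplex C ℤ} (e : HomotopyEquiv K L) :
    IsZero ((HomotopyCategory.quotient C (ComplexShape.up ℤ)).obj (mappingCone e.hom)) :=
  Pretriangulated.Triangle.isZero₃_of_isIso₁ _
    (HomotopyCategory.mappingCone_triangleh_distinguished e.hom)
    (inferInstanceAs (IsIso (HomotopyCategory.isoOfHomotopyEquiv e).hom))

namespace FProjectiveResolution

variable (F : A ⥤ B) (L : B ⥤ A) (X : CochainComplex A ℤ)

/-- Degree `n` of the resolution; `N` is its term in degree `n + 1`. -/
structure Stage (n : ℤ) (N : A) where
  P : A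
  d : P ⟶ N
  π : P ⟶ X.X n
  σ : F.obj (X.X n) ⟶ F.obj P
  τ : F.obj N ⟶ F.obj P
  fProjective : FProjective L P

variable {F L X}

structure Stage.IsCompatible {n : ℤ} {N : A} (U : Stage F L X (n + 1) N)
    (T : Stage F L X n U.P) : Prop where
  d_comp_d : T.d ≫ U.d = 0
  d_comp_π : T.d ≫ U.π = T.π ≫ X.d n (n + 1)
  σ_comp_π : T.σ ≫ F.map T.π = 𝟙 _
  σ_comp_d : T.σ ≫ F.map T.d = F.map (X.d n (n + 1)) ≫ U.σ
  τ_comp_π : T.τ ≫ F.map T.π = 0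
  homotopy : T.τ ≫ F.map T.d + F.map U.d ≫ U.τ = F.map U.π ≫ U.σ - 𝟙 _

namespace Stage

variable {n : ℤ} {N : A}

/-- A sign-twisted mapping cone differential, with kernel `{(y, x) | d y = 0, π y = d x}`. -/
noncomputable def coneD (U : Stage F L X (n + 1) N) : U.P ⊞ X.X n ⟶ N ⊞ X.X (n + 1) :=
  biprod.lift (biprod.fst ≫ U.d) (biprod.fst ≫ U.π - biprod.snd ≫ X.d n (n + 1))

lemma coneD_fst (U : Stage F L X (n + 1) N) : U.coneD ≫ biprod.fst = biprod.fst ≫ U.d :=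
  biprod.lift_fst _ _

lemma coneD_snd (U : Stage F L X (n + 1) N) :
    U.coneD ≫ biprod.snd = biprod.fst ≫ U.π - biprod.snd ≫ X.d n (n + 1) :=
  biprod.lift_snd _ _

noncomputable def coneSection (U : Stage F L X (n + 1) N) :
    F.obj (X.X n) ⟶ F.obj (U.P ⊞ X.X n) :=
  F.map biprod.inr + F.map (X.d n (n + 1)) ≫ U.σ ≫ F.map biprod.inl

noncomputable def defect (U : Stage F L X (n + 1) N) : F.obj U.P ⟶ F.obj U.P :=
  F.map U.π ≫ U.σ - 𝟙 _ - F.map U.d ≫ U.τ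

variable [F.Additive]

lemma coneSection_map_fst (U : Stage F L X (n + 1) N) :
    U.coneSection ≫ F.map biprod.fst = F.map (X.d n (n + 1)) ≫ U.σ := by
  simp only [coneSection, Preadditive.add_comp, Category.assoc, ← F.map_comp, biprod.inr_fst,
    biprod.inl_fst, F.map_id, F.map_zero, Category.comp_id, zero_add]

lemma coneSection_map_snd (U : Stage F L X (n + 1) N) :
    U.coneSection ≫ F.map biprod.snd = 𝟙 _ := by
  simp only [coneSection, Preadditive.add_comp, Category.assoc, ← F.map_comp, biprod.inr_snd,
    biprod.inl_snd, F.map_id, F.map_zero, Limits.comp_zero, add_zero]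

variable {N' : A} {V : Stage F L X (n + 1 + 1) N'} {U : Stage F L X (n + 1) V.P}

lemma IsCompatible.coneSection_comp_map_coneD (h : V.IsCompatible U) :
    U.coneSection ≫ F.map U.coneD = 0 := by
  refine F.map_biprod_hom_ext ?_ ?_
  · rw [Category.assoc, ← F.map_comp, coneD_fst, F.map_comp, reassoc_of% U.coneSection_map_fst,
      h.σ_comp_d, ← F.map_comp_assoc, X.d_comp_d, F.map_zero]
    simp only [Limits.zero_comp]
  · rw [Category.assoc, ← F.map_comp, coneD_snd, F.map_sub, F.map_comp, F.map_comp,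
      Preadditive.comp_sub, reassoc_of% U.coneSection_map_fst, reassoc_of% U.coneSection_map_snd,
      h.σ_comp_π]
    simp only [Category.comp_id, sub_self, Limits.zero_comp]

lemma IsCompatible.defect_comp_map_d (h : V.IsCompatible U) : U.defect ≫ F.map U.d = 0 := by
  have hσ : U.σ ≫ F.map U.d = F.map (X.d (n + 1) (n + 1 + 1)) ≫ V.σ := h.σ_comp_d
  have hπ : F.map U.π ≫ F.map (X.d (n + 1) (n + 1 + 1)) = F.map U.d ≫ F.map V.π := by
    rw [← F.map_comp, ← F.map_comp, h.d_comp_π]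
  have hτ : U.τ ≫ F.map U.d = F.map V.π ≫ V.σ - 𝟙 _ - F.map V.d ≫ V.τ := by
    rw [← h.homotopy]; abel
  have hd : F.map U.d ≫ F.map V.d = 0 := by rw [← F.map_comp, h.d_comp_d, F.map_zero]
  simp only [defect, Preadditive.sub_comp, Category.assoc, hσ, reassoc_of% hπ, hτ,
    Preadditive.comp_sub, reassoc_of% hd]
  simp

lemma IsCompatible.defect_comp_map_π (h : V.IsCompatible U) : U.defect ≫ F.map U.π = 0 := by
  simp [defect, h.σ_comp_π, h.τ_comp_π]

lemma IsCompatible.defect_inl_comp_map_coneD (h : V.IsCompatible U) :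
    (U.defect ≫ F.map biprod.inl) ≫ F.map U.coneD = 0 := by
  refine F.map_biprod_hom_ext ?_ ?_
  · simp only [Category.assoc, ← F.map_comp, coneD_fst, biprod.inl_fst_assoc,
      h.defect_comp_map_d, Limits.zero_comp]
  · simp only [Category.assoc, ← F.map_comp, coneD_snd, Preadditive.comp_sub,
      biprod.inl_fst_assoc, biprod.inl_snd_assoc, Limits.zero_comp, sub_zero,
      h.defect_comp_map_π]

variable (adj : L ⊣ F)

noncomputable abbrev IsCompatible.lowerStage (h : V.IsCompatible U) : Stage F L X n U.P where
  P := L.obj (F.obj (kernel U.coneD))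
  d := adj.counit.app _ ≫ kernel.ι U.coneD ≫ biprod.fst
  π := adj.counit.app _ ≫ kernel.ι U.coneD ≫ biprod.snd
  σ := adj.liftCounitKernel U.coneD U.coneSection h.coneSection_comp_map_coneD
  τ := adj.liftCounitKernel U.coneD (U.defect ≫ F.map biprod.inl) h.defect_inl_comp_map_coneD
  fProjective := ⟨_, 𝟙 _, 𝟙 _, Category.comp_id _⟩

lemma IsCompatible.isCompatible_lowerStage (h : V.IsCompatible U) :
    U.IsCompatible (h.lowerStage adj) where
  d_comp_d := by
    have := kernel.condition U.coneD =≫ biprod.fst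
    rw [Category.assoc, coneD_fst, Limits.zero_comp] at this
    simp only [Category.assoc, this, Limits.comp_zero]
  d_comp_π := by
    have := kernel.condition U.coneD =≫ biprod.snd
    simp only [Category.assoc, coneD_snd, Preadditive.comp_sub, Limits.zero_comp,
      sub_eq_zero] at this
    simp only [Category.assoc, this]
  σ_comp_π := by rw [Adjunction.liftCounitKernel_map, coneSection_map_snd]
  σ_comp_d := by rw [Adjunction.liftCounitKernel_map, coneSection_map_fst]
  τ_comp_π := by
    rw [Adjunction.liftCounitKernel_map]
    simp only [Category.assoc, ← F.map_comp, biprod.inl_snd, F.map_zero, Limits.comp_zero]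
  homotopy := by
    rw [Adjunction.liftCounitKernel_map]
    simp only [Category.assoc, ← F.map_comp, biprod.inl_fst, F.map_id, Category.comp_id,
      defect, sub_add_cancel]

end Stage

variable (F L X) in
noncomputable def Stage.zero (n : ℤ) (N : A) : Stage F L X n N where
  P := 0
  d := 0
  π := 0
  σ := 0
  τ := 0
  fProjective := ⟨0, 0, 0, (isZero_zero A).eq_of_src _ _⟩

lemma Stage.isCompatible_zero [F.Additive] {n : ℤ} (N : A) (hn : IsZero (X.X n)) :
    (Stage.zero F L X (n + 1) N).IsCompatible (Stage.zero F L X n _) where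
  d_comp_d := Limits.zero_comp
  d_comp_π := by simp [Stage.zero]
  σ_comp_π := (F.map_isZero hn).eq_of_src _ _
  σ_comp_d := by simp [Stage.zero]
  τ_comp_π := Limits.zero_comp
  homotopy := (F.map_isZero (isZero_zero A)).eq_of_src _ _

namespace Stage

variable {n : ℤ}

noncomputable def retarget {N N' : A} (T : Stage F L X n N) (e : N = N') : Stage F L X n N' where
  P := T.P
  d := T.d ≫ eqToHom e
  π := T.π
  σ := T.σ
  τ := F.map (eqToHom e.symm) ≫ T.τ
  fProjective := T.fProjective

lemma IsCompatible.retarget {N₁ N₂ N₃ : A} {U : Stage F L X (n + 1) N₁}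
    {V : Stage F L X (n + 1) N₂} {T : Stage F L X n U.P} (h : U.IsCompatible T)
    (hUV : (⟨N₁, U⟩ : Σ N, Stage F L X (n + 1) N) = ⟨N₂, V⟩) (e : N₂ = N₃) :
    (V.retarget e).IsCompatible (T.retarget (congrArg (fun S => S.2.P) hUV)) := by
  obtain ⟨rfl, hUV'⟩ := Sigma.mk.inj hUV
  obtain rfl := eq_of_heq hUV'
  subst e
  cases h
  constructor <;> simpa [Stage.retarget]

end Stage

variable (F L X) in
structure StagePair (n : ℤ) where
  N : A
  upper : Stage F L X (n + 1) N
  lower : Stage F L X n upper.P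
  isCompatible : upper.IsCompatible lower

variable [F.Additive] (adj : L ⊣ F)

noncomputable def StagePair.descend {n : ℤ} (S : StagePair F L X (n + 1)) : StagePair F L X n :=
  ⟨_, S.lower, S.isCompatible.lowerStage adj, S.isCompatible.isCompatible_lowerStage adj⟩

variable (b : ℤ) (hb : ∀ i, b < i → IsZero (X.X i))

noncomputable def tower (n : ℤ) : StagePair F L X n :=
  if h : b < n then ⟨0, _, _, Stage.isCompatible_zero 0 (hb n h)⟩
  else (tower (n + 1)).descend adj
termination_by (b + 1 - n).toNat

lemma tower_of_lt {n : ℤ} (h : b < n) :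
    tower adj b hb n = ⟨0, _, _, Stage.isCompatible_zero 0 (hb n h)⟩ := by
  rw [tower, dif_pos h]

lemma tower_of_le {n : ℤ} (h : n ≤ b) :
    tower adj b hb n = (tower adj b hb (n + 1)).descend adj := by
  rw [tower, dif_neg (not_lt.2 h)]

lemma tower_upper (n : ℤ) :
    (⟨_, (tower adj b hb n).upper⟩ : Σ N, Stage F L X (n + 1) N) =
      ⟨_, (tower adj b hb (n + 1)).lower⟩ := by
  rcases lt_or_ge b n with h | h
  · rw [tower_of_lt adj b hb h, tower_of_lt adj b hb (by omega)]
    rfl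
  · rw [tower_of_le adj b hb h]
    rfl

/-- `tower n` and `tower (n + 1)` agree in degree `n + 1` only up to unfolding the well-founded
recursion, hence the `retarget`. -/
noncomputable def stage (n : ℤ) : Stage F L X n (tower adj b hb (n + 1)).lower.P :=
  (tower adj b hb n).lower.retarget (congrArg (fun S => S.2.P) (tower_upper adj b hb n))

lemma isCompatible_stage (n : ℤ) : (stage adj b hb (n + 1)).IsCompatible (stage adj b hb n) :=
  (tower adj b hb n).isCompatible.retarget (tower_upper adj b hb n) _

noncomputable def resolution : CochainComplex A ℤ :=
  CochainComplex.of (fun n => (stage adj b hb n).P) (fun n => (stage adj b hb n).d)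
    fun n => (isCompatible_stage adj b hb n).d_comp_d

lemma resolution_d (n : ℤ) : (resolution adj b hb).d n (n + 1) = (stage adj b hb n).d :=
  CochainComplex.of_d (fun n => (stage adj b hb n).P) (fun n => (stage adj b hb n).d) n

noncomputable def augmentation : resolution adj b hb ⟶ X where
  f n := (stage adj b hb n).π
  comm' := by
    rintro n _ rfl
    rw [resolution_d]
    exact ((isCompatible_stage adj b hb n).d_comp_π).symm

noncomputable def mapSection :
    (F.mapHomologicalComplex _).obj X ⟶ (F.mapHomologicalComplex _).obj (resolution adj b hb) where
  f n := (stage adj b hb n).σ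
  comm' := by
    rintro n _ rfl
    simp only [Functor.mapHomologicalComplex_obj_d, resolution_d]
    exact (isCompatible_stage adj b hb n).σ_comp_d

noncomputable def mapAugmentationHomotopy :
    Homotopy ((F.mapHomologicalComplex _).map (augmentation adj b hb) ≫ mapSection adj b hb)
      (𝟙 _) := by
  let FP := (F.mapHomologicalComplex (ComplexShape.up ℤ)).obj (resolution adj b hb)
  let τ : ∀ i j, (ComplexShape.up ℤ).Rel j i → (FP.X i ⟶ FP.X j) :=
    fun _ j hij => (FP.XIsoOfEq hij).inv ≫ (stage adj b hb j).τ
  refine Homotopy.equivSubZero.symm ((Homotopy.ofEq ?_).trans (Homotopy.nullHomotopy' τ))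
  ext i
  obtain ⟨n, rfl⟩ : ∃ n, i = n + 1 := ⟨i - 1, by omega⟩
  rw [Homotopy.nullHomotopicMap'_f (rfl : n + 1 = n + 1) rfl]
  simp only [augmentation, mapSection, HomologicalComplex.sub_f_apply, HomologicalComplex.comp_f,
    Functor.mapHomologicalComplex_map_f, HomologicalComplex.id_f,
    Functor.mapHomologicalComplex_obj_d, resolution_d, HomologicalComplex.XIsoOfEq_rfl,
    Iso.refl_inv, τ, FP]
  erw [Category.id_comp, Category.id_comp]
  exact ((add_comm _ _).trans (isCompatible_stage adj b hb n).homotopy).symm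

noncomputable def mapAugmentationHomotopyEquiv :
    HomotopyEquiv ((F.mapHomologicalComplex _).obj (resolution adj b hb))
      ((F.mapHomologicalComplex _).obj X) where
  hom := (F.mapHomologicalComplex _).map (augmentation adj b hb)
  inv := mapSection adj b hb
  homotopyHomInvId := mapAugmentationHomotopy adj b hb
  homotopyInvHomId := Homotopy.ofEq (by ext n; exact (isCompatible_stage adj b hb n).σ_comp_π)

lemma isZero_resolution_X {n : ℤ} (h : b < n) : IsZero ((resolution adj b hb).X n) := by
  change IsZero (tower adj b hb n).lower.P
  rw [tower_of_lt adj b hb h]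
  exact isZero_zero A

lemma fProjective_resolution_X (n : ℤ) : FProjective L ((resolution adj b hb).X n) :=
  (stage adj b hb n).fProjective

end FProjectiveResolution

open FProjectiveResolution

theorem stmt_17_general (F : A ⥤ B) [F.Additive]
    (L : B ⥤ A) (adj₁ : L ⊣ F)
    (X : CochainComplex A ℤ)
    (hX : ∃ b : ℤ, ∀ i : ℤ, b < i → IsZero (X.X i)) :
    ∃ (P : CochainComplex A ℤ) (_ : ∃ b : ℤ, ∀ i : ℤ, b < i → IsZero (P.X i))
      (_ : ∀ i : ℤ, FProjective L (P.X i)) (p : P ⟶ X),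
      Nonempty (Homotopy
        (𝟙 ((F.mapHomologicalComplex (ComplexShape.up ℤ)).obj (CochainComplex.mappingCone p))) 0) := by
  obtain ⟨b, hb⟩ := hX
  refine ⟨resolution adj₁ b hb, ⟨b, fun _ => isZero_resolution_X adj₁ b hb⟩,
    fProjective_resolution_X adj₁ b hb, augmentation adj₁ b hb, ?_⟩
  rw [← HomotopyCategory.isZero_quotient_obj_iff]
  exact (CochainComplex.mappingCone.isZero_quotient_obj_of_homotopyEquiv
    (mapAugmentationHomotopyEquiv adj₁ b hb)).of_iso ((HomotopyCategory.quotient _ _).mapIso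
      (CochainComplex.mappingCone.mapHomologicalComplexIso _ F))

/-- Every bounded above cochain complex `X` over `A` admits an `F`-projective
resolution: a bounded above complex `P` of `F`-projective objects together with a chain
map `p : P ⟶ X` whose mapping cone is `F`-split acyclic (contractible after applying
`F`), i.e. zero in `D_F(A)`. -/
theorem stmt_17 (F : A ⥤ B) [F.Additive] [F.Faithful]
    [PreservesFiniteLimits F] [PreservesFiniteColimits F]
    (L R : B ⥤ A) (adj₁ : L ⊣ F) (adj₂ : F ⊣ R)
    (hepi : ∀ X : A, Epi (adj₁.counit.app X))
    (X : CochainComplex A ℤ)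
    (hX : ∃ b : ℤ, ∀ i : ℤ, b < i → IsZero (X.X i)) :
    ∃ (P : CochainComplex A ℤ) (_ : ∃ b : ℤ, ∀ i : ℤ, b < i → IsZero (P.X i))
      (_ : ∀ i : ℤ, FProjective L (P.X i)) (p : P ⟶ X),
      Nonempty (Homotopy
        (𝟙 ((F.mapHomologicalComplex (ComplexShape.up ℤ)).obj (CochainComplex.mappingCone p))) 0) :=
  stmt_17_general F L adj₁ X hX
end
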